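/- For every simple inequality formula φ: φ is QP-valid (true in every Gärdenfors model) if and only if its translation φ^△ is QPG-valid (has value 1 under the valuation of every QPG model). -/

import Mathlib

/-- Classical propositional formulas (over `~` and `∧`). -/
inductive CPForm : Type
  | atom : ℕ → CPForm
  | neg  : CPForm → CPForm
  | and  : CPForm → CPForm → CPForm

/-- Boolean evaluation of classical formulas. -/
def cpeval (v : ℕ → Bool) : CPForm → Bool
  | .atom n => v n
  | .neg φ => !(cpeval v φ)
  | .and φ ψ => cpeval v φ && cpeval v ψ

/-- `φ` is a classical tautology. -/
def CPTaut (φ : CPForm) : Prop := ∀ v : ℕ → Bool, cpeval v φ = true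

/-- The extension `‖φ‖` of a classical formula in a model with valuation `v`. -/
def cpset {W : Type} (v : ℕ → Set W) : CPForm → Set W
  | .atom n => v n
  | .neg φ => (cpset v φ)ᶜ
  | .and φ ψ => cpset v φ ∩ cpset v ψ

/-- Defined classical implication `φ ⊃ ψ := ~(φ ∧ ~ψ)`. -/
def cpImp (φ ψ : CPForm) : CPForm := (φ.and ψ.neg).neg

/-- Defined classical disjunction `φ ∨ ψ := ~(~φ ∧ ~ψ)`. -/
def cpOr (φ ψ : CPForm) : CPForm := ((φ.neg).and ψ.neg).neg

/-- A classical contradiction `p ∧ ~p`. -/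
def cpBot : CPForm := (CPForm.atom 0).and (CPForm.atom 0).neg

/-- A classical tautology `~(p ∧ ~p)`. -/
def cpTop : CPForm := cpBot.neg

/-- Formulas of the language `L_QG`: atoms `B φ` for classical `φ`,
closed under `∧`, `∨`, `→_G`, `⤙_G`. -/
inductive QGForm : Type
  | bel   : CPForm → QGForm
  | and   : QGForm → QGForm → QGForm
  | or    : QGForm → QGForm → QGForm
  | imp   : QGForm → QGForm → QGForm
  | coimp : QGForm → QGForm → QGForm

/-- Gödel implication on `[0,1] ⊆ ℝ`. -/
noncomputable def gimp (a b : ℝ) : ℝ := if a ≤ b then 1 else b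

/-- Gödel co-implication on `[0,1] ⊆ ℝ`. -/
noncomputable def gcoimp (a b : ℝ) : ℝ := if a ≤ b then 0 else a

/-- The bi-Gödel valuation of `L_QG` formulas in a QG model given by measure `μ`
and classical valuation `v`: `e(Bφ) = μ(‖φ‖)`. -/
noncomputable def qgeval {W : Type} (μ : Set W → ℝ) (v : ℕ → Set W) : QGForm → ℝ
  | .bel φ => μ (cpset v φ)
  | .and α β => min (qgeval μ v α) (qgeval μ v β)
  | .or α β => max (qgeval μ v α) (qgeval μ v β)
  | .imp α β => gimp (qgeval μ v α) (qgeval μ v β)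
  | .coimp α β => gcoimp (qgeval μ v α) (qgeval μ v β)

/-- `μ` is an uncertainty measure on `W`: `[0,1]`-valued, monotone w.r.t. `⊆`,
and `μ(W) > μ(∅)`. -/
def IsUncertainty {W : Type} (μ : Set W → ℝ) : Prop :=
  (∀ X : Set W, μ X ∈ Set.Icc (0:ℝ) 1) ∧ Monotone μ ∧ μ ∅ < μ Set.univ

/-- `⊤_G` in `L_QG`. -/
def qTop : QGForm := (QGForm.bel (CPForm.atom 0)).imp (QGForm.bel (CPForm.atom 0))
/-- `⊥_G` in `L_QG`. -/
def qBot : QGForm := (QGForm.bel (CPForm.atom 0)).coimp (QGForm.bel (CPForm.atom 0))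
/-- Gödel negation `~_G α := α →_G ⊥_G`. -/
def qNot (α : QGForm) : QGForm := α.imp qBot
/-- `△α := (⊤_G ⤙_G α) →_G ⊥_G`. -/
def qDelta (α : QGForm) : QGForm := (qTop.coimp α).imp qBot
/-- `α ↔_G β := (α →_G β) ∧ (β →_G α)`. -/
def qIff (α β : QGForm) : QGForm := (α.imp β).and (β.imp α)

/-- Validity of an `L_QG` formula on an uncertainty frame `⟨W, μ⟩`:
value `1` in every QG model on the frame. -/
def QGValidOnFrame {W : Type} (μ : Set W → ℝ) (α : QGForm) : Prop :=
  ∀ v : ℕ → Set W, qgeval μ v α = 1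

/-- A finitely additive probability measure on `P(W)`, valued in `[0,1]`. -/
def IsProbMeasure {W : Type} (π : Set W → ℝ) : Prop :=
  π ∅ = 0 ∧ π Set.univ = 1 ∧ (∀ X : Set W, π X ∈ Set.Icc (0:ℝ) 1) ∧
    ∀ A B : Set W, Disjoint A B → π (A ∪ B) = π A + π B

/-- Simple inequality formulas: Boolean combinations (via `~`, `∧`, `∨`, `⊃`)
of inequalities `χ ≲ χ'` between classical formulas. -/
inductive SIF : Type
  | leq : CPForm → CPForm → SIF
  | neg : SIF → SIF
  | and : SIF → SIF → SIF
  | or  : SIF → SIF → SIF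
  | imp : SIF → SIF → SIF

/-- Satisfaction of a SIF at a point of a Gärdenfors model: since SIFs contain no
free propositional atoms, it only depends on the measure `P` attached to the point
(and the valuation `v`). -/
def SIFsat {W : Type} (P : Set W → ℝ) (v : ℕ → Set W) : SIF → Prop
  | .leq χ χ' => P (cpset v χ) ≤ P (cpset v χ')
  | .neg φ => ¬ SIFsat P v φ
  | .and φ ψ => SIFsat P v φ ∧ SIFsat P v ψ
  | .or φ ψ => SIFsat P v φ ∨ SIFsat P v ψ
  | .imp φ ψ => SIFsat P v φ → SIFsat P v ψ

/-- The translation `φ^△` of SIFs into `L_QG`. -/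
def sifTrans : SIF → QGForm
  | .leq χ χ' => qDelta ((QGForm.bel χ).imp (QGForm.bel χ'))
  | .neg φ => qNot (sifTrans φ)
  | .and φ ψ => (sifTrans φ).and (sifTrans ψ)
  | .or φ ψ => (sifTrans φ).or (sifTrans ψ)
  | .imp φ ψ => (sifTrans φ).imp (sifTrans ψ)

/-- `μ` satisfies the Kraft–Pratt–Seidenberg conditions `μKPS_m` for all `m`:
for all families `X_0,…,X_m`, `Y_0,…,Y_m` of subsets of `W`, if `μ(X_j) ≤ μ(Y_j)`
for all `j < m` and every `w ∈ W` belongs to exactly as many `X_i`'s as `Y_i`'s,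
then `μ(X_m) ≥ μ(Y_m)`. -/
def muKPS {W : Type} (μ : Set W → ℝ) : Prop :=
  ∀ (m : ℕ) (X Y : Fin (m + 1) → Set W),
    (∀ j : Fin m, μ (X j.castSucc) ≤ μ (Y j.castSucc)) →
    (∀ w : W, Nat.card {i : Fin (m + 1) // w ∈ X i} = Nat.card {i : Fin (m + 1) // w ∈ Y i}) →
    μ (Y (Fin.last m)) ≤ μ (X (Fin.last m))

/-- A SIF is QP-valid: true at every point of every Gärdenfors model. -/
def QPValid (φ : SIF) : Prop :=
  ∀ (U : Type) (_ : Nonempty U) (P : U → Set U → ℝ),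
    (∀ y : U, IsProbMeasure (P y)) → ∀ (v : ℕ → Set U) (x : U), SIFsat (P x) v φ

/-- The translation of a SIF is QPG-valid: it has value `1` in every QPG model. -/
def QPGValid (α : QGForm) : Prop :=
  ∀ (W : Type) (_ : Nonempty W) (μ : Set W → ℝ),
    IsUncertainty μ → muKPS μ → ∀ v : ℕ → Set W, qgeval μ v α = 1

/-!
For a `[0, 1]`-valued `μ` the translation `φ^△` only takes the values `0` and `1`, and takes `1`
exactly when `φ` holds with `μ` in place of the measure `P_x`. A finitely additive probability
satisfies the KPS conditions, since the two families of a KPS instance have the same total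
measure; this gives QP-validity from QPG-validity.

Conversely, let `μ` satisfy KPS. The atoms of `φ` cut `W` into finitely many cells, and the
comparisons in `φ` become comparisons between unions of cells. By Farkas' lemma over `ℚ`, either
some weighting of the cells reproduces all these comparisons, or a strict one is refuted by a
nonnegative rational combination of weak ones. After clearing denominators such a combination is
a KPS instance, which `μ` obeys. So the weighting exists, it is a Gärdenfors model, and QP-validity
of `φ` there transfers back to `μ`.
-/

section Semantics

variable {W : Type}

theorem qgeval_qDelta (μ : Set W → ℝ) (v : ℕ → Set W) (α : QGForm) :
    qgeval μ v (qDelta α) = if 1 ≤ qgeval μ v α then 1 else 0 := by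
  by_cases h : 1 ≤ qgeval μ v α <;> simp [qDelta, qTop, qBot, qgeval, gimp, gcoimp, h]

open Classical in
theorem qgeval_sifTrans {μ : Set W → ℝ} (hμ : ∀ X, μ X ≤ 1) (v : ℕ → Set W) (φ : SIF) :
    qgeval μ v (sifTrans φ) = if SIFsat μ v φ then 1 else 0 := by
  induction φ with
  | leq χ χ' =>
    rw [sifTrans, qgeval_qDelta]
    by_cases h : μ (cpset v χ) ≤ μ (cpset v χ')
    · simp [qgeval, gimp, SIFsat, h]
    · have : μ (cpset v χ') < 1 := (not_le.mp h).trans_le (hμ _)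
      simp [qgeval, gimp, SIFsat, h, this.not_ge]
  | neg ψ ih =>
    simp only [sifTrans, qNot, qgeval, ih, SIFsat, qBot, gcoimp, le_refl, if_true]
    by_cases h : SIFsat μ v ψ <;> simp [gimp, h]
  | and ψ ψ' ih ih' =>
    simp only [sifTrans, qgeval, ih, ih', SIFsat]
    by_cases h : SIFsat μ v ψ <;> by_cases h' : SIFsat μ v ψ' <;> simp [h, h']
  | or ψ ψ' ih ih' =>
    simp only [sifTrans, qgeval, ih, ih', SIFsat]
    by_cases h : SIFsat μ v ψ <;> by_cases h' : SIFsat μ v ψ' <;> simp [h, h']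
  | imp ψ ψ' ih ih' =>
    simp only [sifTrans, qgeval, ih, ih', SIFsat]
    by_cases h : SIFsat μ v ψ <;> by_cases h' : SIFsat μ v ψ' <;> simp [gimp, h, h']

theorem qgeval_sifTrans_eq_one_iff {μ : Set W → ℝ} (hμ : ∀ X, μ X ≤ 1) (v : ℕ → Set W)
    (φ : SIF) : qgeval μ v (sifTrans φ) = 1 ↔ SIFsat μ v φ := by
  classical
  rw [qgeval_sifTrans hμ]
  split_ifs with h <;> simp [h]

end Semantics

namespace IsProbMeasure

variable {W : Type} {π : Set W → ℝ}

theorem monotone (hπ : IsProbMeasure π) : Monotone π := fun A B hAB => by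
  have h := hπ.2.2.2 A (B \ A) Set.disjoint_sdiff_right
  rw [Set.union_sdiff_cancel hAB] at h
  linarith [(hπ.2.2.1 (B \ A)).1]

theorem isUncertainty (hπ : IsProbMeasure π) : IsUncertainty π :=
  ⟨hπ.2.2.1, hπ.monotone, by rw [hπ.1, hπ.2.1]; exact one_pos⟩

theorem preimage_eq_sum {C : Type*} (hπ : IsProbMeasure π) (f : W → C) (S : Finset C) :
    π (f ⁻¹' S) = ∑ c ∈ S, π (f ⁻¹' {c}) := by
  classical
  induction S using Finset.induction_on with
  | empty => simpa using hπ.1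
  | insert c S hc ih =>
    rw [Finset.sum_insert hc, Finset.coe_insert, Set.insert_eq, Set.preimage_union,
      hπ.2.2.2 _ _ ((Set.disjoint_singleton_left.mpr hc).preimage f), ih]

theorem sum_preimage_eq {C ι : Type*} [Fintype C] [Fintype ι] (hπ : IsProbMeasure π)
    (f : W → C) (S : ι → Set C) :
    ∑ i, π (f ⁻¹' S i) = ∑ c, Nat.card {i // c ∈ S i} * π (f ⁻¹' {c}) := by
  classical
  have hS : ∀ i, π (f ⁻¹' S i) = ∑ c, if c ∈ S i then π (f ⁻¹' {c}) else 0 := fun i => by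
    rw [← Finset.sum_filter, ← hπ.preimage_eq_sum]
    simp
  simp only [hS, Nat.card_eq_fintype_card, Fintype.card_subtype]
  rw [Finset.sum_comm]
  refine Finset.sum_congr rfl fun c _ => ?_
  rw [Finset.sum_ite, Finset.sum_const_zero, add_zero, Finset.sum_const, nsmul_eq_mul]

theorem sum_eq_sum_of_card_eq {ι κ : Type*} [Fintype ι] [Fintype κ] (hπ : IsProbMeasure π)
    (X : ι → Set W) (Y : κ → Set W)
    (hXY : ∀ w, Nat.card {i // w ∈ X i} = Nat.card {j // w ∈ Y j}) :
    ∑ i, π (X i) = ∑ j, π (Y j) := by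
  classical
  -- `f w` records which of the sets contain `w`; all the sets are unions of its fibres
  let f : W → Set ι × Set κ := fun w => ({i | w ∈ X i}, {j | w ∈ Y j})
  have hX := hπ.sum_preimage_eq f fun i => {p | i ∈ p.1}
  have hY := hπ.sum_preimage_eq f fun j => {p | j ∈ p.2}
  refine hX.trans (hY.trans (Finset.sum_congr rfl fun p _ => ?_)).symm
  rcases (f ⁻¹' {p}).eq_empty_or_nonempty with h | ⟨w, rfl⟩
  · rw [h, hπ.1, mul_zero, mul_zero]
  · exact congrArg (· * _) (congrArg Nat.cast (hXY w).symm)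

theorem muKPS (hπ : IsProbMeasure π) : muKPS π := fun m X Y hle hcard => by
  have hsum := hπ.sum_eq_sum_of_card_eq X Y hcard
  rw [Fin.sum_univ_castSucc, Fin.sum_univ_castSucc] at hsum
  linarith [Finset.sum_le_sum fun j (_ : j ∈ Finset.univ) => hle j]

end IsProbMeasure

theorem exists_nonneg_sum_insert {𝕜 M ι : Type*} [Semiring 𝕜] [PartialOrder 𝕜] [AddCommMonoid M]
    [Module 𝕜 M] [DecidableEq ι] {s : Finset ι} {a : ι} (ha : a ∉ s) (g : ι → M) {c : ι → 𝕜}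
    (hc : ∀ i ∈ s, 0 ≤ c i) {t : 𝕜} (ht : 0 ≤ t) :
    ∃ c' : ι → 𝕜, (∀ i ∈ insert a s, 0 ≤ c' i) ∧
      ∑ i ∈ insert a s, c' i • g i = t • g a + ∑ i ∈ s, c i • g i := by
  have hupd : ∀ i ∈ s, Function.update c a t i = c i :=
    fun i hi => Function.update_of_ne (ne_of_mem_of_not_mem hi ha) _ _
  refine ⟨Function.update c a t, Finset.forall_mem_insert _ _ _ |>.mpr
    ⟨by rwa [Function.update_self], fun i hi => hupd i hi ▸ hc i hi⟩, ?_⟩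
  rw [Finset.sum_insert ha, Function.update_self,
    Finset.sum_congr rfl fun i hi => by rw [hupd i hi]]

theorem farkas_alternative {𝕜 C ι : Type*} [Field 𝕜] [LinearOrder 𝕜] [IsStrictOrderedRing 𝕜]
    [Fintype C] (s : Finset ι) (g : ι → C → 𝕜) (b : C → 𝕜) :
    (∃ c : ι → 𝕜, (∀ i ∈ s, 0 ≤ c i) ∧ ∑ i ∈ s, c i • g i = b) ∨
      ∃ y : C → 𝕜, (∀ i ∈ s, 0 ≤ y ⬝ᵥ g i) ∧ y ⬝ᵥ b < 0 := by
  classical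
  induction s using Finset.induction_on generalizing g b with
  | empty =>
    by_cases hb : b = 0
    · exact Or.inl ⟨0, by simp, by simp [hb]⟩
    · refine Or.inr ⟨-b, by simp, ?_⟩
      have hbb : 0 ≤ b ⬝ᵥ b := Finset.sum_nonneg fun i _ => mul_self_nonneg (b i)
      rw [neg_dotProduct, neg_neg_iff_pos]
      exact hbb.lt_of_ne' (dotProduct_self_eq_zero.not.mpr hb)
  | insert a s ha ih =>
    rcases ih g b with ⟨c, hc, hcb⟩ | ⟨y, hy, hyb⟩
    · refine Or.inl ((exists_nonneg_sum_insert ha g hc le_rfl).imp fun c' h => ⟨h.1, ?_⟩)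
      rw [h.2, zero_smul, zero_add, hcb]
    by_cases hya : 0 ≤ y ⬝ᵥ g a
    · exact Or.inr ⟨y, Finset.forall_mem_insert _ _ _ |>.mpr ⟨hya, hy⟩, hyb⟩
    rw [not_le] at hya
    -- project along `g a` onto the hyperplane `y ⬝ᵥ x = 0`
    set P : (C → 𝕜) → C → 𝕜 := fun x => x - (y ⬝ᵥ x / y ⬝ᵥ g a) • g a with hP
    rcases ih (P ∘ g) (P b) with ⟨c, hc, hcb⟩ | ⟨z, hz, hzb⟩
    · set t := y ⬝ᵥ b / y ⬝ᵥ g a - ∑ i ∈ s, c i * (y ⬝ᵥ g i / y ⬝ᵥ g a)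
      have ht : 0 ≤ t := by
        have h1 : 0 < y ⬝ᵥ b / y ⬝ᵥ g a := div_pos_of_neg_of_neg hyb hya
        have h2 : ∑ i ∈ s, c i * (y ⬝ᵥ g i / y ⬝ᵥ g a) ≤ 0 :=
          Finset.sum_nonpos fun i hi => mul_nonpos_of_nonneg_of_nonpos (hc i hi)
            (div_nonpos_of_nonneg_of_nonpos (hy i hi) hya.le)
        linarith
      refine Or.inl ((exists_nonneg_sum_insert ha g hc ht).imp fun c' h => ⟨h.1, h.2.trans ?_⟩)
      simp only [hP, Function.comp_apply, smul_sub, smul_smul, Finset.sum_sub_distrib,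
        ← Finset.sum_smul] at hcb
      linear_combination (norm := module) hcb
    · have key : ∀ x, (z - (z ⬝ᵥ g a / y ⬝ᵥ g a) • y) ⬝ᵥ x = z ⬝ᵥ P x := fun x => by
        simp only [hP, sub_dotProduct, dotProduct_sub, smul_dotProduct, dotProduct_smul,
          smul_eq_mul, dotProduct_comm y x]
        ring
      have hPa : P (g a) = 0 := by simp only [hP, div_self hya.ne, one_smul, sub_self]
      refine Or.inr ⟨_, ?_, by rwa [key]⟩
      rw [Finset.forall_mem_insert, key, hPa, dotProduct_zero]
      exact ⟨le_rfl, fun i hi => (key (g i)).symm ▸ hz i hi⟩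

theorem Nat.card_subtype_mem_eq_sum_indicator {J V : Type*} [Fintype J] (Z : J → Set V) (w : V) :
    Nat.card {j // w ∈ Z j} = ∑ j, (Z j).indicator 1 w := by
  classical
  rw [Nat.card_eq_fintype_card, Fintype.card_subtype, Finset.card_filter]
  refine Finset.sum_congr rfl fun j _ => ?_
  by_cases h : w ∈ Z j <;> simp [h]

theorem exists_nat_mul_eq_nat {ι : Type*} (s : Finset ι) (c : ι → ℚ) (hc : ∀ i ∈ s, 0 ≤ c i) :
    ∃ N : ℕ, ∃ n : ι → ℕ, ∀ i ∈ s, ((N + 1 : ℕ) : ℚ) * c i = n i := by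
  classical
  -- the common denominator `∏ i ∈ s, (c i).den`, written as `N + 1`
  obtain ⟨N, hN⟩ : ∃ N, ∏ i ∈ s, (c i).den = N + 1 :=
    Nat.exists_eq_add_one.mpr (Finset.prod_pos fun i _ => (c i).den_pos)
  refine ⟨N, fun i => (∏ j ∈ s.erase i, (c j).den) * (c i).num.toNat, fun i hi => ?_⟩
  rw [← hN, ← Finset.prod_erase_mul s _ hi]
  push_cast
  rw [mul_assoc, Rat.den_mul_eq_num]
  exact_mod_cast congrArg _ (Int.toNat_of_nonneg (Rat.num_nonneg.mpr (hc i hi))).symm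

/-- The pair `(A, B)` stands for the comparison `A ≲ B`. -/
noncomputable def indicatorDiff {C : Type*} (p : Set C × Set C) : C → ℚ :=
  p.2.indicator 1 - p.1.indicator 1

theorem dotProduct_indicatorDiff_empty_singleton {C : Type*} [Fintype C] (q : C → ℚ) (c : C) :
    q ⬝ᵥ indicatorDiff (∅, {c}) = q c := by
  classical
  simp [indicatorDiff, dotProduct, Pi.single_apply]

section KPS

variable {W : Type} {μ : Set W → ℝ}

theorem muKPS.le_of_card_eq (hK : muKPS μ) {J : Type*} [Fintype J] (X Y : Option J → Set W)
    (hle : ∀ j, μ (X (some j)) ≤ μ (Y (some j)))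
    (hcard : ∀ w, Nat.card {o // w ∈ X o} = Nat.card {o // w ∈ Y o}) :
    μ (Y none) ≤ μ (X none) := by
  let e : Fin (Fintype.card J + 1) ≃ Option J :=
    finSuccEquivLast.trans (Equiv.optionCongr (Fintype.equivFin J).symm)
  have he : e (Fin.last _) = none := by simp [e]
  have := hK _ (X ∘ e) (Y ∘ e) (fun j => by simp [e, Equiv.optionCongr_symm]; exact hle _)
    fun w => (Nat.card_congr (e.subtypeEquiv fun _ => Iff.rfl)).trans
      ((hcard w).trans (Nat.card_congr (e.subtypeEquiv fun _ => Iff.rfl)).symm)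
  simpa [he] using this

theorem muKPS.le_of_nat_comb (hK : muKPS μ) {ι : Type*} (s : Finset ι) (n : ι → ℕ)
    (X Y : ι → Set W) (hle : ∀ i ∈ s, μ (X i) ≤ μ (Y i)) (N : ℕ) {A B : Set W}
    (hAB : μ A ≤ μ B)
    (hcount : ∀ w, ∑ i ∈ s, n i * (X i).indicator 1 w + (N + 1) * A.indicator 1 w =
      ∑ i ∈ s, n i * (Y i).indicator 1 w + (N + 1) * B.indicator 1 w) :
    μ B ≤ μ A := by
  -- `n i` copies of each `(X i, Y i)` and `N + 1` copies of `(A, B)`, one of which comes last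
  let X' : Option ((Σ i : s, Fin (n i)) ⊕ Fin N) → Set W :=
    fun o => o.elim A (Sum.elim (fun x => X x.1) fun _ => A)
  let Y' : Option ((Σ i : s, Fin (n i)) ⊕ Fin N) → Set W :=
    fun o => o.elim B (Sum.elim (fun x => Y x.1) fun _ => B)
  refine hK.le_of_card_eq X' Y' ?_ fun w => ?_
  · rintro (⟨i, _⟩ | _)
    exacts [hle i i.2, hAB]
  · have := hcount w
    simp only [Nat.card_subtype_mem_eq_sum_indicator, Fintype.sum_option, Fintype.sum_sum_type,
      Fintype.sum_sigma, X', Y', Option.elim, Sum.elim_inl, Sum.elim_inr, Finset.sum_const,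
      Finset.card_univ, Fintype.card_fin, smul_eq_mul,
      Finset.sum_coe_sort s fun i => n i * (X i).indicator 1 w,
      Finset.sum_coe_sort s fun i => n i * (Y i).indicator 1 w]
    linarith

theorem muKPS.le_of_mem_cone {C : Type*} (hK : muKPS μ) (f : W → C) (s : Finset (Set C × Set C))
    (hle : ∀ p ∈ s, μ (f ⁻¹' p.1) ≤ μ (f ⁻¹' p.2)) (c : Set C × Set C → ℚ)
    (hc : ∀ p ∈ s, 0 ≤ c p) {S T : Set C} (hST : μ (f ⁻¹' S) ≤ μ (f ⁻¹' T))
    (hcone : ∑ p ∈ s, c p • indicatorDiff p = indicatorDiff (T, S)) :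
    μ (f ⁻¹' T) ≤ μ (f ⁻¹' S) := by
  obtain ⟨N, n, hn⟩ := exists_nat_mul_eq_nat s c hc
  refine hK.le_of_nat_comb s n (fun p => f ⁻¹' p.1) (fun p => f ⁻¹' p.2) hle N hST fun w => ?_
  have hw := congrArg (fun x => ((N + 1 : ℕ) : ℚ) * x (f w)) hcone
  simp only [Finset.sum_apply, Pi.smul_apply, smul_eq_mul, Finset.mul_sum, ← mul_assoc,
    indicatorDiff, Pi.sub_apply] at hw
  rw [Finset.sum_congr rfl fun p hp => by rw [hn p hp]] at hw
  have hind : ∀ A : Set C, (((f ⁻¹' A).indicator 1 w : ℕ) : ℚ) = A.indicator 1 (f w) :=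
    fun A => by by_cases h : f w ∈ A <;> simp [h]
  simp only [mul_sub, Finset.sum_sub_distrib] at hw
  apply Nat.cast_injective (R := ℚ)
  push_cast [hind] at hw ⊢
  linarith

theorem muKPS.exists_weights {C : Type*} [Fintype C] (hK : muKPS μ) (f : W → C)
    {weak strict : Finset (Set C × Set C)} (hsub : strict ⊆ weak)
    (hweak : ∀ p ∈ weak, μ (f ⁻¹' p.1) ≤ μ (f ⁻¹' p.2))
    (hstrict : ∀ p ∈ strict, μ (f ⁻¹' p.1) < μ (f ⁻¹' p.2)) :
    ∃ q : C → ℚ, (∀ p ∈ weak, 0 ≤ q ⬝ᵥ indicatorDiff p) ∧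
      ∀ p ∈ strict, 0 < q ⬝ᵥ indicatorDiff p := by
  classical
  have hsep : ∀ p ∈ strict, ∃ y : C → ℚ,
      (∀ p' ∈ weak, 0 ≤ y ⬝ᵥ indicatorDiff p') ∧ 0 < y ⬝ᵥ indicatorDiff p := by
    intro p hp
    rcases farkas_alternative weak indicatorDiff (-indicatorDiff p) with
      ⟨c, hc, hcone⟩ | ⟨y, hy, hyp⟩
    · rw [show -indicatorDiff p = indicatorDiff (p.2, p.1) from neg_sub _ _] at hcone
      exact absurd (hK.le_of_mem_cone f weak hweak c hc (hweak p (hsub hp)) hcone)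
        (hstrict p hp).not_ge
    · exact ⟨y, hy, by simpa [dotProduct_neg] using hyp⟩
  choose! y hy hyp using hsep
  refine ⟨∑ p ∈ strict, y p, fun p' hp' => ?_, fun p' hp' => ?_⟩ <;> rw [sum_dotProduct]
  · exact Finset.sum_nonneg fun p hp => hy p hp p' hp'
  · exact Finset.sum_pos' (fun p hp => hy p hp p' (hsub hp')) ⟨p', hp', hyp p' hp'⟩

end KPS

section Weights

variable {C : Type} [Fintype C]

noncomputable def weightProb (q : C → ℚ) (S : Set C) : ℝ :=
  (q ⬝ᵥ S.indicator 1 / q ⬝ᵥ 1 : ℚ)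

theorem isProbMeasure_weightProb {q : C → ℚ} (hq : 0 ≤ q) (hpos : 0 < q ⬝ᵥ 1) :
    IsProbMeasure (weightProb q) := by
  refine ⟨by simp [weightProb], by simp [weightProb, hpos.ne'], fun X => ?_, fun A B hAB => ?_⟩
  · have h0 : 0 ≤ q ⬝ᵥ X.indicator 1 :=
      dotProduct_nonneg_of_nonneg hq fun x => Set.indicator_nonneg (fun _ _ => zero_le_one) x
    have h1 : q ⬝ᵥ X.indicator 1 ≤ q ⬝ᵥ 1 :=
      dotProduct_le_dotProduct_of_nonneg_left (Set.indicator_le_self' fun _ _ => zero_le_one) hq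
    simp only [weightProb, Set.mem_Icc, Rat.cast_nonneg, ← Rat.cast_one (α := ℝ), Rat.cast_le]
    exact ⟨div_nonneg h0 hpos.le, (div_le_one hpos).mpr h1⟩
  · have hind : (A ∪ B).indicator (1 : C → ℚ) = A.indicator 1 + B.indicator 1 :=
      Set.indicator_union_of_disjoint hAB 1
    simp only [weightProb, hind, dotProduct_add, add_div, Rat.cast_add]

theorem weightProb_le_iff {q : C → ℚ} (hpos : 0 < q ⬝ᵥ 1) (p : Set C × Set C) :
    weightProb q p.1 ≤ weightProb q p.2 ↔ 0 ≤ q ⬝ᵥ indicatorDiff p := by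
  rw [weightProb, weightProb, Rat.cast_le, div_le_div_iff_of_pos_right hpos, indicatorDiff,
    dotProduct_sub, sub_nonneg]

end Weights

theorem exists_isProbMeasure_le_iff_of_muKPS {W C : Type} [Fintype C] {μ : Set W → ℝ}
    (hmono : Monotone μ) (hpos : μ ∅ < μ Set.univ) (hK : muKPS μ) (f : W → C)
    (Q : List (Set C × Set C)) :
    ∃ π : Set C → ℝ, IsProbMeasure π ∧
      ∀ p ∈ Q, (π p.1 ≤ π p.2 ↔ μ (f ⁻¹' p.1) ≤ μ (f ⁻¹' p.2)) := by
  classical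
  let ν : Set C → ℝ := fun S => μ (f ⁻¹' S)
  -- `(∅, univ)` makes the total weight positive, the pairs `(∅, {c})` make each weight nonnegative
  let strict :=
    insert (∅, Set.univ) ((Q.toFinset.filter fun p => ¬ ν p.1 ≤ ν p.2).image Prod.swap)
  let weak := strict ∪ (Finset.univ.image fun c => (∅, {c})) ∪
    Q.toFinset.filter fun p => ν p.1 ≤ ν p.2
  have hstrict : ∀ p ∈ strict, ν p.1 < ν p.2 := by
    simp only [strict, Finset.mem_insert, Finset.mem_image, Finset.mem_filter]
    rintro _ (rfl | ⟨p, ⟨-, hp⟩, rfl⟩)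
    exacts [hpos, not_le.mp hp]
  have hweak : ∀ p ∈ weak, ν p.1 ≤ ν p.2 := by
    simp only [weak, Finset.mem_union, Finset.mem_image, Finset.mem_filter]
    rintro p ((hp | ⟨c, -, rfl⟩) | ⟨-, hp⟩)
    exacts [(hstrict p hp).le, hmono (Set.empty_subset _), hp]
  obtain ⟨q, hqweak, hqstrict⟩ :=
    hK.exists_weights f (Finset.subset_union_left.trans Finset.subset_union_left) hweak hstrict
  have hq : 0 ≤ q := fun c => by
    simpa [dotProduct_indicatorDiff_empty_singleton] using hqweak (∅, {c}) <|
      Finset.mem_union_left _ <| Finset.mem_union_right _ <| Finset.mem_image_of_mem _ <|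
        Finset.mem_univ c
  have hqpos : 0 < q ⬝ᵥ 1 := by
    simpa [indicatorDiff] using hqstrict (∅, Set.univ) (Finset.mem_insert_self _ _)
  refine ⟨weightProb q, isProbMeasure_weightProb hq hqpos, fun p hp => ?_⟩
  rw [weightProb_le_iff hqpos]
  by_cases h : ν p.1 ≤ ν p.2
  · exact iff_of_true (hqweak p (Finset.mem_union_right _
      (Finset.mem_filter.mpr ⟨List.mem_toFinset.mpr hp, h⟩))) h
  · refine iff_of_false (fun h' => ?_) h
    have := hqstrict p.swap (Finset.mem_insert_of_mem (Finset.mem_image_of_mem _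
      (Finset.mem_filter.mpr ⟨List.mem_toFinset.mpr hp, h⟩)))
    rw [show indicatorDiff p.swap = -indicatorDiff p from (neg_sub _ _).symm,
      dotProduct_neg] at this
    linarith

def CPForm.atomBound : CPForm → ℕ
  | .atom n => n + 1
  | .neg χ => χ.atomBound
  | .and χ χ' => max χ.atomBound χ'.atomBound

theorem cpset_eq_preimage {W V : Type} {v : ℕ → Set W} {v' : ℕ → Set V} (f : W → V)
    (χ : CPForm) (h : ∀ n < χ.atomBound, v n = f ⁻¹' v' n) : cpset v χ = f ⁻¹' cpset v' χ := by
  induction χ with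
  | atom n => exact h n n.lt_succ_self
  | neg χ ih => simp only [cpset, ih h, Set.preimage_compl]
  | and χ χ' ih ih' =>
    simp only [cpset, Set.preimage_inter, CPForm.atomBound, lt_max_iff] at h ⊢
    rw [ih fun n hn => h n (Or.inl hn), ih' fun n hn => h n (Or.inr hn)]

def SIF.comparisons : SIF → List (CPForm × CPForm)
  | leq χ χ' => [(χ, χ')]
  | neg φ => φ.comparisons
  | and φ ψ | or φ ψ | imp φ ψ => φ.comparisons ++ ψ.comparisons

theorem SIFsat_iff_of_comparisons {W V : Type} {P : Set W → ℝ} {P' : Set V → ℝ}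
    {v : ℕ → Set W} {v' : ℕ → Set V} (φ : SIF)
    (h : ∀ p ∈ φ.comparisons,
      (P (cpset v p.1) ≤ P (cpset v p.2) ↔ P' (cpset v' p.1) ≤ P' (cpset v' p.2))) :
    SIFsat P v φ ↔ SIFsat P' v' φ := by
  induction φ with
  | leq χ χ' => exact h _ (List.mem_singleton_self _)
  | neg φ ih => exact (ih h).not
  | and φ ψ ihφ ihψ | or φ ψ ihφ ihψ | imp φ ψ ihφ ihψ =>
    simp only [SIF.comparisons, List.mem_append] at h
    simp only [SIFsat, ihφ fun p hp => h p (Or.inl hp), ihψ fun p hp => h p (Or.inr hp)]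

theorem SIFsat_of_QPValid {W : Type} {μ : Set W → ℝ} (hU : IsUncertainty μ) (hK : muKPS μ)
    (v : ℕ → Set W) {φ : SIF} (hφ : QPValid φ) : SIFsat μ v φ := by
  classical
  let M := (φ.comparisons.map fun p => p.1.atomBound + p.2.atomBound).sum
  let f : W → Fin M → Bool := fun w i => decide (w ∈ v i)
  let v' : ℕ → Set (Fin M → Bool) := fun n => {σ | ∃ h : n < M, σ ⟨n, h⟩ = true}
  have hcpset : ∀ χ : CPForm, χ.atomBound ≤ M → cpset v χ = f ⁻¹' cpset v' χ :=
    fun χ hχ => cpset_eq_preimage f χ fun n hn => by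
      ext w
      simp [f, v', hn.trans_le hχ]
  obtain ⟨π, hπ, hrep⟩ := exists_isProbMeasure_le_iff_of_muKPS hU.2.1 hU.2.2 hK f
    (φ.comparisons.map fun p => (cpset v' p.1, cpset v' p.2))
  refine (SIFsat_iff_of_comparisons φ fun p hp => ?_).mp
    (hφ _ ⟨fun _ => false⟩ (fun _ => π) (fun _ => hπ) v' fun _ => false)
  have hM : p.1.atomBound + p.2.atomBound ≤ M :=
    List.le_sum_of_mem (List.mem_map_of_mem hp)
  rw [hrep _ (List.mem_map_of_mem hp), hcpset p.1 (by omega), hcpset p.2 (by omega)]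

/-- a simple inequality formula `φ` is QP-valid iff its translation
`φ^△` is QPG-valid. -/
theorem SIF_QP_valid_iff_QPG_valid (φ : SIF) :
    QPValid φ ↔ QPGValid (sifTrans φ) := by
  constructor
  · intro hφ W _ μ hU hK v
    rw [qgeval_sifTrans_eq_one_iff fun X => (hU.1 X).2]
    exact SIFsat_of_QPValid hU hK v hφ
  · intro hφ U hU P hP v x
    rw [← qgeval_sifTrans_eq_one_iff fun X => ((hP x).2.2.1 X).2]
    exact hφ U hU (P x) (hP x).isUncertainty (hP x).muKPS v
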